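/- The principle AV is provable in GCI extended with Tennant's classical rules: for every formula φ, the sequent ⇒ τxφ(x)=τyφ(y) (where τyφ(y) is the alphabetic variant of τxφ(x)) is provable in that calculus. -/
import Mathlib


mutual
/-- Terms: bound variables, parameters, and complex terms `τxφ` formed by a
unary term-forming operator binding a variable in a formula. -/
inductive Tm : Type
  | var : ℕ → Tm
  | par : ℕ → Tm
  | tau : ℕ → Fm → Tm

/-- Formulas: atomic formulas (unary/binary predicates and identity) closed
under ¬, ∧, ∨, →, ↔, ∀, ∃. -/
inductive Fm : Type
  | pred1 : ℕ → Tm → Fm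
  | pred2 : ℕ → Tm → Tm → Fm
  | eq : Tm → Tm → Fm
  | neg : Fm → Fm
  | and : Fm → Fm → Fm
  | or : Fm → Fm → Fm
  | imp : Fm → Fm → Fm
  | iff : Fm → Fm → Fm
  | all : ℕ → Fm → Fm
  | ex : ℕ → Fm → Fm
end

/-- The membership atom `t ∈ t'` (the binary predicate with index 0). -/
def memF (t t' : Tm) : Fm := Fm.pred2 0 t t'

mutual
/-- Substitution of the term `u` for the bound variable `x` in a term. -/
def substT (x : ℕ) (u : Tm) : Tm → Tm
  | .var y => if y = x then u else .var y
  | .par a => .par a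
  | .tau y φ => if y = x then .tau y φ else .tau y (substF x u φ)

/-- Substitution `φ[x/u]` of the term `u` for the bound variable `x` in a formula. -/
def substF (x : ℕ) (u : Tm) : Fm → Fm
  | .pred1 n t => .pred1 n (substT x u t)
  | .pred2 n t t' => .pred2 n (substT x u t) (substT x u t')
  | .eq t t' => .eq (substT x u t) (substT x u t')
  | .neg φ => .neg (substF x u φ)
  | .and φ ψ => .and (substF x u φ) (substF x u ψ)
  | .or φ ψ => .or (substF x u φ) (substF x u ψ)
  | .imp φ ψ => .imp (substF x u φ) (substF x u ψ)
  | .iff φ ψ => .iff (substF x u φ) (substF x u ψ)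
  | .all y φ => if y = x then .all y φ else .all y (substF x u φ)
  | .ex y φ => if y = x then .ex y φ else .ex y (substF x u φ)
end

mutual
/-- Substitution of the parameter `b₂` for the parameter `b₁` in a term. -/
def substPT (b₁ b₂ : ℕ) : Tm → Tm
  | .var y => .var y
  | .par a => if a = b₁ then .par b₂ else .par a
  | .tau y φ => .tau y (substPF b₁ b₂ φ)

/-- Substitution `φ[b₁/b₂]` of the parameter `b₂` for the parameter `b₁` in a formula. -/
def substPF (b₁ b₂ : ℕ) : Fm → Fm
  | .pred1 n t => .pred1 n (substPT b₁ b₂ t)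
  | .pred2 n t t' => .pred2 n (substPT b₁ b₂ t) (substPT b₁ b₂ t')
  | .eq t t' => .eq (substPT b₁ b₂ t) (substPT b₁ b₂ t')
  | .neg φ => .neg (substPF b₁ b₂ φ)
  | .and φ ψ => .and (substPF b₁ b₂ φ) (substPF b₁ b₂ ψ)
  | .or φ ψ => .or (substPF b₁ b₂ φ) (substPF b₁ b₂ ψ)
  | .imp φ ψ => .imp (substPF b₁ b₂ φ) (substPF b₁ b₂ ψ)
  | .iff φ ψ => .iff (substPF b₁ b₂ φ) (substPF b₁ b₂ ψ)
  | .all y φ => .all y (substPF b₁ b₂ φ)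
  | .ex y φ => .ex y (substPF b₁ b₂ φ)
end

mutual
/-- Occurrence of the parameter `a` in a term. -/
def pOccT (a : ℕ) : Tm → Bool
  | .var _ => false
  | .par b => b == a
  | .tau _ φ => pOccF a φ

/-- Occurrence of the parameter `a` in a formula. -/
def pOccF (a : ℕ) : Fm → Bool
  | .pred1 _ t => pOccT a t
  | .pred2 _ t t' => pOccT a t || pOccT a t'
  | .eq t t' => pOccT a t || pOccT a t'
  | .neg φ => pOccF a φ
  | .and φ ψ => pOccF a φ || pOccF a ψ
  | .or φ ψ => pOccF a φ || pOccF a ψ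
  | .imp φ ψ => pOccF a φ || pOccF a ψ
  | .iff φ ψ => pOccF a φ || pOccF a ψ
  | .all _ φ => pOccF a φ
  | .ex _ φ => pOccF a φ
end

mutual
/-- Occurrence (free, bound or as a binder) of the variable `x` in a term. -/
def vOccT (x : ℕ) : Tm → Bool
  | .var y => y == x
  | .par _ => false
  | .tau y φ => y == x || vOccF x φ

/-- Occurrence (free, bound or as a binder) of the variable `x` in a formula. -/
def vOccF (x : ℕ) : Fm → Bool
  | .pred1 _ t => vOccT x t
  | .pred2 _ t t' => vOccT x t || vOccT x t'
  | .eq t t' => vOccT x t || vOccT x t'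
  | .neg φ => vOccF x φ
  | .and φ ψ => vOccF x φ || vOccF x ψ
  | .or φ ψ => vOccF x φ || vOccF x ψ
  | .imp φ ψ => vOccF x φ || vOccF x ψ
  | .iff φ ψ => vOccF x φ || vOccF x ψ
  | .all y φ => y == x || vOccF x φ
  | .ex y φ => y == x || vOccF x φ
end

/-- The parameter `a` is fresh for (does not occur in) the formula `φ`. -/
def FreshF (a : ℕ) (φ : Fm) : Prop := pOccF a φ = false

/-- The parameter `a` is fresh for the term `t`. -/
def FreshT (a : ℕ) (t : Tm) : Prop := pOccT a t = false

/-- The parameter `a` is fresh for every formula of the multiset `Γ`. -/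
def FreshM (a : ℕ) (Γ : Multiset Fm) : Prop := ∀ φ ∈ Γ, pOccF a φ = false

/-- Atomic formulas. -/
def Atomic : Fm → Prop
  | .pred1 _ _ => True
  | .pred2 _ _ _ => True
  | .eq _ _ => True
  | _ => False

/-- The constraints that a stratification assignment `σ` must satisfy on a formula:
for every membership atom `t ∈ t'` we need `σ t' = σ t + 1` and for every identity
atom `t = t'` we need `σ t = σ t'`. -/
def stratOK (σ : Tm → ℤ) : Fm → Prop
  | .pred2 0 t t' => σ t' = σ t + 1
  | .eq t t' => σ t = σ t'
  | .neg φ => stratOK σ φ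
  | .and φ ψ => stratOK σ φ ∧ stratOK σ ψ
  | .or φ ψ => stratOK σ φ ∧ stratOK σ ψ
  | .imp φ ψ => stratOK σ φ ∧ stratOK σ ψ
  | .iff φ ψ => stratOK σ φ ∧ stratOK σ ψ
  | .all _ φ => stratOK σ φ
  | .ex _ φ => stratOK σ φ
  | _ => True

/-- A formula is stratified if some integer assignment satisfies all its
atomic constraints. -/
def Stratified (φ : Fm) : Prop := ∃ σ : Tm → ℤ, stratOK σ φ

/-- Flags selecting the rules of the various sequent calculi considered. -/
structure Flags where
  /-- the rule (Cut) -/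
  cut : Bool := true
  /-- pure variant: (∀⇒),(⇒∃) restricted to instantiation by parameters -/
  pure : Bool := false
  /-- the rule (Ref) -/
  ref : Bool := false
  /-- the rule (2LL) for atomic formulas -/
  ll2 : Bool := false
  /-- the rule (Ext) -/
  ext : Bool := false
  /-- the rule (AV) -/
  av : Bool := false
  /-- the rule (ExtAV) -/
  extav : Bool := false
  /-- the rule (a⇒) -/
  aIntro : Bool := false
  /-- axiomatic sequents ⇒EXT -/
  axEXT : Bool := false
  /-- axiomatic sequents ⇒AV -/
  axAV : Bool := false
  /-- axiomatic sequents ⇒EXTAV -/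
  axEXTAV : Bool := false
  /-- Tennant's classical rules (⇒τ),(τ⇒) for the given relation `R` -/
  tenn : Option (Tm → Tm → Fm) := none
  /-- axiomatic sequents for both halves of the Hintikka axiom for the given `R` -/
  axHA : Option (Tm → Tm → Fm) := none
  /-- the NF rules (⇒=) and (=⇒) -/
  eqNF : Bool := false
  /-- the NF rules (Abs⇒) and (⇒Abs) -/
  abs : Bool := false
  /-- the rule (3LL) for ∈-atoms -/
  ll3 : Bool := false
  /-- the GTNF rules (⇒:) and (:⇒) -/
  colon : Bool := false
  /-- the rule (2LL') for ∈-atoms -/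
  ll2' : Bool := false
  /-- the rule (3LL') for =-atoms -/
  ll3' : Bool := false
  /-- axiomatic sequents of the axiomatic system for NF -/
  axNF : Bool := false

/-- `Dh F n Γ Δ` : the sequent `Γ ⇒ Δ` has a proof of height at most `n` in the
sequent calculus determined by the flags `F`. -/
inductive Dh (F : Flags) : ℕ → Multiset Fm → Multiset Fm → Prop
  | ax : ∀ n φ Γ Δ, Dh F (n+1) (φ ::ₘ Γ) (φ ::ₘ Δ)
  | cut : ∀ n φ Γ Δ Γ' Δ', F.cut = true →
      Dh F n Γ (φ ::ₘ Δ) → Dh F n (φ ::ₘ Γ') Δ' → Dh F (n+1) (Γ + Γ') (Δ + Δ')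
  | wL : ∀ n φ Γ Δ, Dh F n Γ Δ → Dh F (n+1) (φ ::ₘ Γ) Δ
  | wR : ∀ n φ Γ Δ, Dh F n Γ Δ → Dh F (n+1) Γ (φ ::ₘ Δ)
  | cL : ∀ n φ Γ Δ, Dh F n (φ ::ₘ φ ::ₘ Γ) Δ → Dh F (n+1) (φ ::ₘ Γ) Δ
  | cR : ∀ n φ Γ Δ, Dh F n Γ (φ ::ₘ φ ::ₘ Δ) → Dh F (n+1) Γ (φ ::ₘ Δ)
  | negL : ∀ n φ Γ Δ, Dh F n Γ (φ ::ₘ Δ) → Dh F (n+1) (Fm.neg φ ::ₘ Γ) Δ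
  | negR : ∀ n φ Γ Δ, Dh F n (φ ::ₘ Γ) Δ → Dh F (n+1) Γ (Fm.neg φ ::ₘ Δ)
  | andL : ∀ n φ ψ Γ Δ, Dh F n (φ ::ₘ ψ ::ₘ Γ) Δ → Dh F (n+1) (Fm.and φ ψ ::ₘ Γ) Δ
  | andR : ∀ n φ ψ Γ Δ, Dh F n Γ (φ ::ₘ Δ) → Dh F n Γ (ψ ::ₘ Δ) →
      Dh F (n+1) Γ (Fm.and φ ψ ::ₘ Δ)
  | orL : ∀ n φ ψ Γ Δ, Dh F n (φ ::ₘ Γ) Δ → Dh F n (ψ ::ₘ Γ) Δ →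
      Dh F (n+1) (Fm.or φ ψ ::ₘ Γ) Δ
  | orR : ∀ n φ ψ Γ Δ, Dh F n Γ (φ ::ₘ ψ ::ₘ Δ) → Dh F (n+1) Γ (Fm.or φ ψ ::ₘ Δ)
  | impL : ∀ n φ ψ Γ Δ, Dh F n Γ (φ ::ₘ Δ) → Dh F n (ψ ::ₘ Γ) Δ →
      Dh F (n+1) (Fm.imp φ ψ ::ₘ Γ) Δ
  | impR : ∀ n φ ψ Γ Δ, Dh F n (φ ::ₘ Γ) (ψ ::ₘ Δ) → Dh F (n+1) Γ (Fm.imp φ ψ ::ₘ Δ)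
  | iffL : ∀ n φ ψ Γ Δ, Dh F n Γ (φ ::ₘ ψ ::ₘ Δ) → Dh F n (φ ::ₘ ψ ::ₘ Γ) Δ →
      Dh F (n+1) (Fm.iff φ ψ ::ₘ Γ) Δ
  | iffR : ∀ n φ ψ Γ Δ, Dh F n (φ ::ₘ Γ) (ψ ::ₘ Δ) → Dh F n (ψ ::ₘ Γ) (φ ::ₘ Δ) →
      Dh F (n+1) Γ (Fm.iff φ ψ ::ₘ Δ)
  | allL : ∀ n x φ t Γ Δ, (F.pure = true → ∃ a, t = Tm.par a) →
      Dh F n (substF x t φ ::ₘ Γ) Δ → Dh F (n+1) (Fm.all x φ ::ₘ Γ) Δ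
  | exR : ∀ n x φ t Γ Δ, (F.pure = true → ∃ a, t = Tm.par a) →
      Dh F n Γ (substF x t φ ::ₘ Δ) → Dh F (n+1) Γ (Fm.ex x φ ::ₘ Δ)
  | allR : ∀ n x φ a Γ Δ, FreshF a φ → FreshM a Γ → FreshM a Δ →
      Dh F n Γ (substF x (Tm.par a) φ ::ₘ Δ) → Dh F (n+1) Γ (Fm.all x φ ::ₘ Δ)
  | exL : ∀ n x φ a Γ Δ, FreshF a φ → FreshM a Γ → FreshM a Δ →
      Dh F n (substF x (Tm.par a) φ ::ₘ Γ) Δ → Dh F (n+1) (Fm.ex x φ ::ₘ Γ) Δ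
  | ref : ∀ n t Γ Δ, F.ref = true → Dh F n (Fm.eq t t ::ₘ Γ) Δ → Dh F (n+1) Γ Δ
  | ll2 : ∀ n x φ t₁ t₂ Γ Δ, F.ll2 = true → Atomic φ →
      Dh F n Γ (Fm.eq t₁ t₂ ::ₘ Δ) → Dh F n Γ (substF x t₁ φ ::ₘ Δ) →
      Dh F (n+1) Γ (substF x t₂ φ ::ₘ Δ)
  | ext : ∀ n x φ ψ a Γ Δ, F.ext = true →
      FreshF a φ → FreshF a ψ → FreshM a Γ → FreshM a Δ →
      Dh F n (substF x (Tm.par a) φ ::ₘ Γ) (substF x (Tm.par a) ψ ::ₘ Δ) →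
      Dh F n (substF x (Tm.par a) ψ ::ₘ Γ) (substF x (Tm.par a) φ ::ₘ Δ) →
      Dh F (n+1) Γ (Fm.eq (Tm.tau x φ) (Tm.tau x ψ) ::ₘ Δ)
  | av : ∀ n x y φ Γ Δ, F.av = true → vOccF y φ = false →
      Dh F n (Fm.eq (Tm.tau x φ) (Tm.tau y (substF x (Tm.var y) φ)) ::ₘ Γ) Δ →
      Dh F (n+1) Γ Δ
  | extav : ∀ n x y φ ψ a b Γ Δ, F.extav = true → x ≠ y → a ≠ b →
      FreshF a φ → FreshF a ψ → FreshM a Γ → FreshM a Δ →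
      FreshF b φ → FreshF b ψ → FreshM b Γ → FreshM b Δ →
      Dh F n (Fm.eq (Tm.par a) (Tm.par b) ::ₘ substF x (Tm.par a) φ ::ₘ Γ)
        (substF y (Tm.par b) ψ ::ₘ Δ) →
      Dh F n (Fm.eq (Tm.par a) (Tm.par b) ::ₘ substF y (Tm.par b) ψ ::ₘ Γ)
        (substF x (Tm.par a) φ ::ₘ Δ) →
      Dh F (n+1) Γ (Fm.eq (Tm.tau x φ) (Tm.tau y ψ) ::ₘ Δ)
  | aIntro : ∀ n x φ a Γ Δ, F.aIntro = true → FreshF a φ → FreshM a Γ → FreshM a Δ →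
      Dh F n (Fm.eq (Tm.par a) (Tm.tau x φ) ::ₘ Γ) Δ → Dh F (n+1) Γ Δ
  | axEXT : ∀ n x φ ψ, F.axEXT = true →
      Dh F (n+1) 0 {Fm.imp (Fm.all x (Fm.iff φ ψ)) (Fm.eq (Tm.tau x φ) (Tm.tau x ψ))}
  | axAV : ∀ n x y φ, F.axAV = true → vOccF y φ = false →
      Dh F (n+1) 0 {Fm.eq (Tm.tau x φ) (Tm.tau y (substF x (Tm.var y) φ))}
  | axEXTAV : ∀ n x y φ ψ, F.axEXTAV = true → x ≠ y →
      Dh F (n+1) 0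
        {Fm.imp (Fm.all x (Fm.all y (Fm.imp (Fm.eq (Tm.var x) (Tm.var y)) (Fm.iff φ ψ))))
          (Fm.eq (Tm.tau x φ) (Tm.tau y ψ))}
  | tauR : ∀ n R x φ t a Γ Δ, F.tenn = some R → FreshF a φ → FreshM a Γ → FreshM a Δ →
      Dh F n (substF x (Tm.par a) φ ::ₘ Γ) (R (Tm.par a) t ::ₘ Δ) →
      Dh F n (R (Tm.par a) t ::ₘ Γ) (substF x (Tm.par a) φ ::ₘ Δ) →
      Dh F (n+1) Γ (Fm.eq t (Tm.tau x φ) ::ₘ Δ)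
  | tauL1 : ∀ n R x φ t b Γ Δ, F.tenn = some R →
      Dh F n Γ (substF x (Tm.par b) φ ::ₘ Δ) → Dh F n (R (Tm.par b) t ::ₘ Γ) Δ →
      Dh F (n+1) (Fm.eq t (Tm.tau x φ) ::ₘ Γ) Δ
  | tauL2 : ∀ n R x φ t b Γ Δ, F.tenn = some R →
      Dh F n Γ (R (Tm.par b) t ::ₘ Δ) → Dh F n (substF x (Tm.par b) φ ::ₘ Γ) Δ →
      Dh F (n+1) (Fm.eq t (Tm.tau x φ) ::ₘ Γ) Δ
  | axHA1 : ∀ n R x φ t, F.axHA = some R →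
      Dh F (n+1) {Fm.eq t (Tm.tau x φ)} {Fm.all x (Fm.iff φ (R (Tm.var x) t))}
  | axHA2 : ∀ n R x φ t, F.axHA = some R →
      Dh F (n+1) {Fm.all x (Fm.iff φ (R (Tm.var x) t))} {Fm.eq t (Tm.tau x φ)}
  | eqNFR : ∀ n t t' a Γ Δ, F.eqNF = true →
      FreshT a t → FreshT a t' → FreshM a Γ → FreshM a Δ →
      Dh F n (memF (Tm.par a) t ::ₘ Γ) (memF (Tm.par a) t' ::ₘ Δ) →
      Dh F n (memF (Tm.par a) t' ::ₘ Γ) (memF (Tm.par a) t ::ₘ Δ) →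
      Dh F (n+1) Γ (Fm.eq t t' ::ₘ Δ)
  | eqNFL : ∀ n t t' b Γ Δ, F.eqNF = true →
      Dh F n Γ (memF (Tm.par b) t ::ₘ memF (Tm.par b) t' ::ₘ Δ) →
      Dh F n (memF (Tm.par b) t ::ₘ memF (Tm.par b) t' ::ₘ Γ) Δ →
      Dh F (n+1) (Fm.eq t t' ::ₘ Γ) Δ
  | absL : ∀ n x φ t Γ Δ, F.abs = true → Stratified φ →
      Dh F n (substF x t φ ::ₘ Γ) Δ → Dh F (n+1) (memF t (Tm.tau x φ) ::ₘ Γ) Δ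
  | absR : ∀ n x φ t Γ Δ, F.abs = true → Stratified φ →
      Dh F n Γ (substF x t φ ::ₘ Δ) → Dh F (n+1) Γ (memF t (Tm.tau x φ) ::ₘ Δ)
  | ll3a : ∀ n t t' t'' Γ Δ, F.ll3 = true →
      Dh F n Γ (Fm.eq t t' ::ₘ Δ) → Dh F n Γ (memF t'' t ::ₘ Δ) →
      Dh F n (memF t'' t' ::ₘ Γ) Δ → Dh F (n+1) Γ Δ
  | ll3b : ∀ n t t' t'' Γ Δ, F.ll3 = true →
      Dh F n Γ (Fm.eq t t' ::ₘ Δ) → Dh F n Γ (memF t t'' ::ₘ Δ) →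
      Dh F n (memF t' t'' ::ₘ Γ) Δ → Dh F (n+1) Γ Δ
  | colonR : ∀ n x φ t a Γ Δ, F.colon = true → Stratified φ →
      FreshF a φ → FreshM a Γ → FreshM a Δ →
      Dh F n (substF x (Tm.par a) φ ::ₘ Γ) (memF (Tm.par a) t ::ₘ Δ) →
      Dh F n (memF (Tm.par a) t ::ₘ Γ) (substF x (Tm.par a) φ ::ₘ Δ) →
      Dh F (n+1) Γ (Fm.eq t (Tm.tau x φ) ::ₘ Δ)
  | colonL1 : ∀ n x φ t b Γ Δ, F.colon = true → Stratified φ →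
      Dh F n Γ (substF x (Tm.par b) φ ::ₘ Δ) → Dh F n (memF (Tm.par b) t ::ₘ Γ) Δ →
      Dh F (n+1) (Fm.eq t (Tm.tau x φ) ::ₘ Γ) Δ
  | colonL2 : ∀ n x φ t b Γ Δ, F.colon = true → Stratified φ →
      Dh F n Γ (memF (Tm.par b) t ::ₘ Δ) → Dh F n (substF x (Tm.par b) φ ::ₘ Γ) Δ →
      Dh F (n+1) (Fm.eq t (Tm.tau x φ) ::ₘ Γ) Δ
  | ll2'a : ∀ n t t' t'' Γ Δ, F.ll2' = true →
      Dh F n Γ (Fm.eq t t' ::ₘ Δ) → Dh F n Γ (memF t'' t ::ₘ Δ) →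
      Dh F (n+1) Γ (memF t'' t' ::ₘ Δ)
  | ll2'b : ∀ n t t' t'' Γ Δ, F.ll2' = true →
      Dh F n Γ (Fm.eq t t' ::ₘ Δ) → Dh F n Γ (memF t t'' ::ₘ Δ) →
      Dh F (n+1) Γ (memF t' t'' ::ₘ Δ)
  | ll3' : ∀ n t t' t'' Γ Δ, F.ll3' = true →
      Dh F n Γ (Fm.eq t t' ::ₘ Δ) → Dh F n Γ (Fm.eq t t'' ::ₘ Δ) →
      Dh F n (Fm.eq t' t'' ::ₘ Γ) Δ → Dh F (n+1) Γ Δ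
  | axNF1 : ∀ n x y φ, F.axNF = true → Stratified φ →
      Dh F (n+1) 0 {Fm.all x (Fm.iff (memF (Tm.var x) (Tm.tau y φ)) (substF y (Tm.var x) φ))}
  | axNF2 : ∀ n x y z, F.axNF = true → x ≠ y → x ≠ z → y ≠ z →
      Dh F (n+1) 0
        {Fm.all x (Fm.all y (Fm.all z (Fm.imp (Fm.eq (Tm.var x) (Tm.var y))
          (Fm.imp (memF (Tm.var x) (Tm.var z)) (memF (Tm.var y) (Tm.var z))))))}
  | axNF3 : ∀ n x y z, F.axNF = true → x ≠ y → x ≠ z → y ≠ z →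
      Dh F (n+1) 0
        {Fm.all x (Fm.all y (Fm.iff (Fm.eq (Tm.var x) (Tm.var y))
          (Fm.all z (Fm.iff (memF (Tm.var z) (Tm.var x)) (memF (Tm.var z) (Tm.var y))))))}

/-- Provability of the sequent `Γ ⇒ Δ` in the calculus determined by `F`. -/
def Proves (F : Flags) (Γ Δ : Multiset Fm) : Prop := ∃ n, Dh F n Γ Δ

/-- GC: classical first-order sequent calculus. -/
def GC : Flags := {}

/-- GCI: GC with the identity rules (Ref) and (2LL). -/
def GCI : Flags := { ref := true, ll2 := true }

/-- GPCI: the pure variant of GCI. -/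
def GPCI : Flags := { pure := true, ref := true, ll2 := true }

/-- GS: GPCI + (Ext) + (AV) + (a⇒). -/
def GS : Flags := { pure := true, ref := true, ll2 := true, ext := true, av := true, aIntro := true }

/-- GS': GPCI + (ExtAV) + (a⇒). -/
def GS' : Flags := { pure := true, ref := true, ll2 := true, extav := true, aIntro := true }

/-- GSNF: GPC + (⇒=) + (=⇒) + (Abs⇒) + (⇒Abs) + (3LL). -/
def GSNF : Flags := { pure := true, eqNF := true, abs := true, ll3 := true }

/-- GTNF: GPC + (⇒:) + (:⇒) + (Ref) + (2LL') + (3LL'). -/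
def GTNF : Flags := { pure := true, colon := true, ref := true, ll2' := true, ll3' := true }

/-- The axiomatic sequent system for NF: GC + the NF axiomatic sequents. -/
def NFax : Flags := { axNF := true }

/-- GCI with Tennant's classical rules for the relation R. -/
def GCT : Flags := { GCI with tenn := some (Fm.pred2 0) }


-- Auxiliary lemmas for AV_provable

mutual
theorem substT_id (y : ℕ) (u : Tm) : ∀ t : Tm, vOccT y t = false → substT y u t = t
  | .var z, h => by
      simp only [vOccT, beq_eq_false_iff_ne, ne_eq] at h
      simp [substT, h]
  | .par a, _ => rfl
  | .tau z ψ, h => by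
      simp only [vOccT, Bool.or_eq_false_iff, beq_eq_false_iff_ne, ne_eq] at h
      simp [substT, h.1, substF_id y u ψ h.2]

theorem substF_id (y : ℕ) (u : Tm) : ∀ φ : Fm, vOccF y φ = false → substF y u φ = φ
  | .pred1 n t, h => by
      simp only [vOccF] at h; simp [substF, substT_id y u t h]
  | .pred2 n t t', h => by
      simp only [vOccF, Bool.or_eq_false_iff] at h
      simp [substF, substT_id y u t h.1, substT_id y u t' h.2]
  | .eq t t', h => by
      simp only [vOccF, Bool.or_eq_false_iff] at h
      simp [substF, substT_id y u t h.1, substT_id y u t' h.2]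
  | .neg ψ, h => by simp only [vOccF] at h; simp [substF, substF_id y u ψ h]
  | .and ψ χ, h => by
      simp only [vOccF, Bool.or_eq_false_iff] at h
      simp [substF, substF_id y u ψ h.1, substF_id y u χ h.2]
  | .or ψ χ, h => by
      simp only [vOccF, Bool.or_eq_false_iff] at h
      simp [substF, substF_id y u ψ h.1, substF_id y u χ h.2]
  | .imp ψ χ, h => by
      simp only [vOccF, Bool.or_eq_false_iff] at h
      simp [substF, substF_id y u ψ h.1, substF_id y u χ h.2]
  | .iff ψ χ, h => by
      simp only [vOccF, Bool.or_eq_false_iff] at h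
      simp [substF, substF_id y u ψ h.1, substF_id y u χ h.2]
  | .all z ψ, h => by
      simp only [vOccF, Bool.or_eq_false_iff, beq_eq_false_iff_ne, ne_eq] at h
      simp [substF, h.1, substF_id y u ψ h.2]
  | .ex z ψ, h => by
      simp only [vOccF, Bool.or_eq_false_iff, beq_eq_false_iff_ne, ne_eq] at h
      simp [substF, h.1, substF_id y u ψ h.2]
end

mutual
theorem substT_comp (x y : ℕ) (u : Tm) :
    ∀ t : Tm, vOccT y t = false → substT y u (substT x (Tm.var y) t) = substT x u t
  | .var z, h => by
      simp only [vOccT, beq_eq_false_iff_ne, ne_eq] at h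
      by_cases hz : z = x
      · simp [substT, hz]
      · simp [substT, hz, h]
  | .par a, _ => rfl
  | .tau z ψ, h => by
      simp only [vOccT, Bool.or_eq_false_iff, beq_eq_false_iff_ne, ne_eq] at h
      by_cases hz : z = x
      · simp [substT, hz, h.1, substF_id y u ψ h.2]
      · simp [substT, hz, h.1, substF_comp x y u ψ h.2]

theorem substF_comp (x y : ℕ) (u : Tm) :
    ∀ φ : Fm, vOccF y φ = false → substF y u (substF x (Tm.var y) φ) = substF x u φ
  | .pred1 n t, h => by
      simp only [vOccF] at h; simp [substF, substT_comp x y u t h]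
  | .pred2 n t t', h => by
      simp only [vOccF, Bool.or_eq_false_iff] at h
      simp [substF, substT_comp x y u t h.1, substT_comp x y u t' h.2]
  | .eq t t', h => by
      simp only [vOccF, Bool.or_eq_false_iff] at h
      simp [substF, substT_comp x y u t h.1, substT_comp x y u t' h.2]
  | .neg ψ, h => by simp only [vOccF] at h; simp [substF, substF_comp x y u ψ h]
  | .and ψ χ, h => by
      simp only [vOccF, Bool.or_eq_false_iff] at h
      simp [substF, substF_comp x y u ψ h.1, substF_comp x y u χ h.2]
  | .or ψ χ, h => by
      simp only [vOccF, Bool.or_eq_false_iff] at h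
      simp [substF, substF_comp x y u ψ h.1, substF_comp x y u χ h.2]
  | .imp ψ χ, h => by
      simp only [vOccF, Bool.or_eq_false_iff] at h
      simp [substF, substF_comp x y u ψ h.1, substF_comp x y u χ h.2]
  | .iff ψ χ, h => by
      simp only [vOccF, Bool.or_eq_false_iff] at h
      simp [substF, substF_comp x y u ψ h.1, substF_comp x y u χ h.2]
  | .all z ψ, h => by
      simp only [vOccF, Bool.or_eq_false_iff, beq_eq_false_iff_ne, ne_eq] at h
      by_cases hz : z = x
      · simp [substF, hz, h.1, substF_id y u ψ h.2]
      · simp [substF, hz, h.1, substF_comp x y u ψ h.2]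
  | .ex z ψ, h => by
      simp only [vOccF, Bool.or_eq_false_iff, beq_eq_false_iff_ne, ne_eq] at h
      by_cases hz : z = x
      · simp [substF, hz, h.1, substF_id y u ψ h.2]
      · simp [substF, hz, h.1, substF_comp x y u ψ h.2]
end

mutual
/-- A bound above all parameters occurring in a term. -/
def pBdT : Tm → ℕ
  | .var _ => 0
  | .par a => a + 1
  | .tau _ φ => pBdF φ

/-- A bound above all parameters occurring in a formula. -/
def pBdF : Fm → ℕ
  | .pred1 _ t => pBdT t
  | .pred2 _ t t' => max (pBdT t) (pBdT t')
  | .eq t t' => max (pBdT t) (pBdT t')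
  | .neg φ => pBdF φ
  | .and φ ψ => max (pBdF φ) (pBdF ψ)
  | .or φ ψ => max (pBdF φ) (pBdF ψ)
  | .imp φ ψ => max (pBdF φ) (pBdF ψ)
  | .iff φ ψ => max (pBdF φ) (pBdF ψ)
  | .all _ φ => pBdF φ
  | .ex _ φ => pBdF φ
end

mutual
theorem pBdT_spec (a : ℕ) : ∀ t : Tm, pBdT t ≤ a → pOccT a t = false
  | .var _, _ => rfl
  | .par b, h => by
      simp only [pBdT] at h
      simp only [pOccT, beq_eq_false_iff_ne, ne_eq]
      omega
  | .tau z ψ, h => pBdF_spec a ψ h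

theorem pBdF_spec (a : ℕ) : ∀ φ : Fm, pBdF φ ≤ a → pOccF a φ = false
  | .pred1 n t, h => pBdT_spec a t h
  | .pred2 n t t', h => by
      simp only [pBdF, max_le_iff] at h
      simp [pOccF, pBdT_spec a t h.1, pBdT_spec a t' h.2]
  | .eq t t', h => by
      simp only [pBdF, max_le_iff] at h
      simp [pOccF, pBdT_spec a t h.1, pBdT_spec a t' h.2]
  | .neg ψ, h => pBdF_spec a ψ h
  | .and ψ χ, h => by
      simp only [pBdF, max_le_iff] at h
      simp [pOccF, pBdF_spec a ψ h.1, pBdF_spec a χ h.2]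
  | .or ψ χ, h => by
      simp only [pBdF, max_le_iff] at h
      simp [pOccF, pBdF_spec a ψ h.1, pBdF_spec a χ h.2]
  | .imp ψ χ, h => by
      simp only [pBdF, max_le_iff] at h
      simp [pOccF, pBdF_spec a ψ h.1, pBdF_spec a χ h.2]
  | .iff ψ χ, h => by
      simp only [pBdF, max_le_iff] at h
      simp [pOccF, pBdF_spec a ψ h.1, pBdF_spec a χ h.2]
  | .all z ψ, h => pBdF_spec a ψ h
  | .ex z ψ, h => pBdF_spec a ψ h
end


/-- The principle AV is provable in GCI + Tennant's classical rules. -/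
theorem AV_provable (x y : ℕ) (φ : Fm) (hy : vOccF y φ = false) :
    Proves GCT 0 {Fm.eq (Tm.tau x φ) (Tm.tau y (substF x (Tm.var y) φ))} := by
  set φ' := substF x (Tm.var y) φ with hφ'
  set T := Tm.tau x φ with hT
  set a := pBdF φ' with ha
  set ψ := substF x (Tm.par a) φ with hψ
  have hfresh : FreshF a φ' := pBdF_spec a φ' le_rfl
  have hcomp : substF y (Tm.par a) φ' = ψ := substF_comp x y _ φ hy
  have hM0 : FreshM a (0 : Multiset Fm) := by intro χ h; simp at h
  have P1 : Dh GCT 3 {ψ} {memF (Tm.par a) T} := by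
    apply Dh.ref 2 T _ _ rfl
    apply Dh.tauL1 1 (Fm.pred2 0) x φ T a _ _ rfl
    · exact Dh.ax 0 ψ 0 {memF (Tm.par a) T}
    · exact Dh.ax 0 (memF (Tm.par a) T) {ψ} 0
  have P2 : Dh GCT 3 {memF (Tm.par a) T} {ψ} := by
    apply Dh.ref 2 T _ _ rfl
    apply Dh.tauL2 1 (Fm.pred2 0) x φ T a _ _ rfl
    · exact Dh.ax 0 (memF (Tm.par a) T) 0 {ψ}
    · exact Dh.ax 0 ψ {memF (Tm.par a) T} 0
  refine ⟨4, ?_⟩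
  have := Dh.tauR 3 (Fm.pred2 0) y φ' T a 0 0 rfl hfresh hM0 hM0
    (by rw [hcomp]; exact P1) (by rw [hcomp]; exact P2)
  exact this
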